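/- arXiv:2405.19903 — 3 statements merged into one kernel-verified Lean document; each statement's English description precedes it below -/
import Mathlib

section
/- Let T > 0, α ∈ (−1,0), and let f : [0,∞) → [0,∞) be measurable with ∫_0^δ f(u) du < ∞ for every δ > 0, such that 0 ≤ f(u) ≤ c u^α for all u ∈ (0,T] and some constant c > 0. Then for every κ ∈ (0,1) with 1 + α − κ > 0 there exists a constant C > 0 (depending on f, κ, α, T) such that D_f(s,t) ≤ C (min(s,t))^α |t−s|^{2+α−κ} for all 0 < s, t ≤ T. -/
open MeasureTheory Real Filter

/-- The kernel `K_f(s,t)`, with `x * log x = 0` at `x = 0` (automatic since `Real.log 0 = 0`). -/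
noncomputable def Kf (f : ℝ → ℝ) (s t : ℝ) : ℝ :=
  2 * ∫ u in (0:ℝ)..(min s t),
    f u * ((s + t - 2*u) * Real.log (s + t - 2*u)
      - (s - u) * Real.log (s - u) - (t - u) * Real.log (t - u))

/-- The increment functional `D_f(s,t) = K_f(t,t) - 2 K_f(s,t) + K_f(s,s)`,
equal to `E (ζ_t - ζ_s)^2` for a centered process with covariance `K_f`. -/
noncomputable def Df (f : ℝ → ℝ) (s t : ℝ) : ℝ :=
  Kf f t t - 2 * Kf f s t + Kf f s s

lemma Gbound (a h : ℝ) (ha : 0 ≤ a) (hh : 0 < h) :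
    Real.log 2 * ((a + h) + a) - (2*a + h) * Real.log (2*a + h)
      + a * Real.log a + (a + h) * Real.log (a + h) ≤ h^2 / (2*a + h) := by
  have hX : 0 < 2*a + h := by linarith
  have hah : 0 < a + h := by linarith
  have key2 : (a+h) * (Real.log 2 + Real.log (a+h) - Real.log (2*a+h))
      ≤ (a+h) * (2*(a+h)/(2*a+h) - 1) := by
    have : Real.log 2 + Real.log (a+h) - Real.log (2*a+h) = Real.log (2*(a+h)/(2*a+h)) := by
      rw [Real.log_div (by positivity) (by positivity), Real.log_mul (by norm_num) (by positivity)]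
    rw [this]
    exact mul_le_mul_of_nonneg_left (Real.log_le_sub_one_of_pos (by positivity)) (le_of_lt hah)
  have key1 : a * (Real.log 2 + Real.log a - Real.log (2*a+h))
      ≤ a * (2*a/(2*a+h) - 1) := by
    rcases eq_or_lt_of_le ha with h0 | ha'
    · simp [← h0]
    · have : Real.log 2 + Real.log a - Real.log (2*a+h) = Real.log (2*a/(2*a+h)) := by
        rw [Real.log_div (by positivity) (by positivity), Real.log_mul (by norm_num) (by positivity)]
      rw [this]
      exact mul_le_mul_of_nonneg_left (Real.log_le_sub_one_of_pos (by positivity)) (le_of_lt ha')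
  have expand : Real.log 2 * ((a + h) + a) - (2*a + h) * Real.log (2*a + h)
      + a * Real.log a + (a + h) * Real.log (a + h)
      = a * (Real.log 2 + Real.log a - Real.log (2*a+h))
        + (a+h) * (Real.log 2 + Real.log (a+h) - Real.log (2*a+h)) := by ring
  rw [expand]
  have : a * (2*a/(2*a+h) - 1) + (a+h) * (2*(a+h)/(2*a+h) - 1) = h^2/(2*a+h) := by
    field_simp
    ring
  linarith

lemma ftc_aux (θ p l r : ℝ) (hθ : 0 < θ) (hlr : l ≤ r) (hpos : 0 < p - 2*r) :
    ∫ u in l..r, (p - 2*u)^(θ-1) = ((p-2*l)^θ - (p-2*r)^θ)/(2*θ) := by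
  have hpt : ∀ u ∈ Set.uIcc l r, 0 < p - 2*u := by
    intro u hu
    rw [Set.uIcc_of_le hlr] at hu
    nlinarith [hu.2]
  have hderiv : ∀ u ∈ Set.uIcc l r,
      HasDerivAt (fun x => -(p - 2*x)^θ/(2*θ)) ((p - 2*u)^(θ-1)) u := by
    intro u hu
    have h1 : HasDerivAt (fun x : ℝ => p - 2*x) (-2) u := by
      have := ((hasDerivAt_id u).const_mul (2:ℝ)).const_sub p
      simp only [id, mul_one] at this
      exact this
    have h2 : HasDerivAt (fun x : ℝ => (p - 2*x)^θ)
        (θ * (p - 2*u)^(θ-1) * (-2)) u := by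
      have := (Real.hasDerivAt_rpow_const (p := θ) (Or.inl (ne_of_gt (hpt u hu)))).comp u h1
      exact this
    have h3 := h2.div_const (2*θ)
    have h4 := h3.neg
    refine HasDerivAt.congr_deriv (f := fun x => -(p - 2*x)^θ/(2*θ))
      (f' := -(θ * (p - 2*u)^(θ-1) * (-2)) / (2*θ)) ?_ ?_
    · exact h2.neg.div_const (2*θ)
    · field_simp
  have hint : IntervalIntegrable (fun u => (p - 2*u)^(θ-1)) volume l r := by
    apply ContinuousOn.intervalIntegrable
    apply ContinuousOn.rpow_const
    · exact (continuous_const.sub (continuous_const.mul continuous_id)).continuousOn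
    · exact fun u hu => Or.inl (ne_of_gt (hpt u hu))
  rw [intervalIntegral.integral_eq_sub_of_hasDerivAt hderiv hint]
  ring

lemma aux2 (d X θ : ℝ) (hd : 0 < d) (hθ : 0 < θ) (hdX : d ≤ X) :
    d^2 / X ≤ d^(2-θ) * X^(θ-1) := by
  have hX : 0 < X := lt_of_lt_of_le hd hdX
  have h1 : d^θ ≤ X^θ := Real.rpow_le_rpow hd.le hdX hθ.le
  have h2 : (1:ℝ) ≤ X^θ/d^θ := (one_le_div (Real.rpow_pos_of_pos hd θ)).2 h1
  have e : d^(2-θ) * X^(θ-1) = (d^((2:ℝ))/X) * (X^θ/d^θ) := by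
    rw [Real.rpow_sub hd, Real.rpow_sub hX, Real.rpow_one]
    field_simp
  have e2 : d^2 = d^((2:ℝ)) := by
    rw [← Real.rpow_natCast d 2]; norm_num
  calc d^2/X = (d^((2:ℝ))/X) * 1 := by rw [mul_one, e2]
    _ ≤ (d^((2:ℝ))/X) * (X^θ/d^θ) := by
        apply mul_le_mul_of_nonneg_left h2 (by positivity)
    _ = d^(2-θ) * X^(θ-1) := e.symm

lemma Kf_comm (f : ℝ → ℝ) (s t : ℝ) : Kf f s t = Kf f t s := by
  unfold Kf
  rw [min_comm]
  congr 1
  apply intervalIntegral.integral_congr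
  intro u _
  simp only
  rw [show s + t - 2*u = t + s - 2*u by ring]
  ring

lemma Ktt_aux (f : ℝ → ℝ) (t : ℝ) (ht : 0 < t) :
    Kf f t t = 4 * Real.log 2 * ∫ u in (0:ℝ)..t, f u * (t - u) := by
  unfold Kf
  rw [min_self]
  have hcongr : Set.EqOn
      (fun u => f u * ((t + t - 2*u) * Real.log (t + t - 2*u)
        - (t - u) * Real.log (t - u) - (t - u) * Real.log (t - u)))
      (fun u => (2 * Real.log 2) * (f u * (t - u))) (Set.uIcc 0 t) := by
    intro u hu
    rw [Set.uIcc_of_le (le_of_lt ht)] at hu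
    simp only
    rcases eq_or_lt_of_le hu.2 with h | h
    · subst h
      rw [show u+u-2*u = (0:ℝ) by ring, show u - u = (0:ℝ) by ring]
      simp
    · have h1 : t + t - 2*u = 2 * (t - u) := by ring
      rw [h1, Real.log_mul two_ne_zero (ne_of_gt (sub_pos.2 h))]
      ring
  rw [intervalIntegral.integral_congr hcongr, intervalIntegral.integral_const_mul]
  ring

set_option maxHeartbeats 2000000 in
lemma main_est (T : ℝ) (hT : 0 < T) (α : ℝ) (hα : α ∈ Set.Ioo (-1 : ℝ) 0)
    (f : ℝ → ℝ)
    (hf_nonneg : ∀ u, 0 ≤ u → 0 ≤ f u)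
    (hf_int : ∀ δ : ℝ, 0 < δ → IntervalIntegrable f volume 0 δ)
    (c : ℝ) (hc : 0 < c) (hbound : ∀ u ∈ Set.Ioc (0:ℝ) T, f u ≤ c * u ^ α)
    (κ : ℝ) (hκ : κ ∈ Set.Ioo (0:ℝ) 1) (hκα : 0 < 1 + α - κ)
    (s t : ℝ) (hs : 0 < s) (hst : s < t) (ht : t ≤ T) :
    Df f s t ≤ (4*(c * 2^(-α)/(2*(α+1)) * T^(κ-α)) + 4*(c * 2^(-α) * T^(κ-α)/(2*(κ-α)))
        + 4*Real.log 2*(c*T^(κ-α))) * (s^α * (t-s)^(2+α-κ)) := by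
  obtain ⟨hα1, hα2⟩ := hα
  obtain ⟨hκ1, hκ2⟩ := hκ
  have hα1' : 0 < α + 1 := by linarith
  have hθ : 0 < κ - α := by linarith
  have hd : 0 < t - s := by linarith
  have ht0 : 0 < t := lt_trans hs hst
  have hdT : t - s ≤ T := by linarith
  have hsT : s ≤ T := by linarith
  -- integrability of f
  have hfs : IntervalIntegrable f volume 0 s := hf_int s hs
  have hft : IntervalIntegrable f volume 0 t := hf_int t ht0
  have hfst : IntervalIntegrable f volume s t := hfs.symm.trans hft
  -- continuity facts
  have cml := Real.continuous_mul_log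
  have c1 : Continuous (fun u : ℝ => (s + t - 2*u) * Real.log (s + t - 2*u)) :=
    cml.comp (by continuity)
  have c2 : Continuous (fun u : ℝ => (s - u) * Real.log (s - u)) := cml.comp (by continuity)
  have c3 : Continuous (fun u : ℝ => (t - u) * Real.log (t - u)) := cml.comp (by continuity)
  have cE : Continuous (fun u : ℝ => (s + t - 2*u) * Real.log (s + t - 2*u)
      - (s - u) * Real.log (s - u) - (t - u) * Real.log (t - u)) := (c1.sub c2).sub c3
  have cG : Continuous (fun u : ℝ => Real.log 2 * ((t - u) + (s - u))
      - (s + t - 2*u) * Real.log (s + t - 2*u)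
      + (s - u) * Real.log (s - u) + (t - u) * Real.log (t - u)) :=
    (((continuous_const.mul (by continuity)).sub c1).add c2).add c3
  -- integrability of products
  have i_fE : IntervalIntegrable (fun u => f u * ((s + t - 2*u) * Real.log (s + t - 2*u)
      - (s - u) * Real.log (s - u) - (t - u) * Real.log (t - u))) volume 0 s :=
    hfs.mul_continuousOn cE.continuousOn
  have i_fG : IntervalIntegrable (fun u => f u * (Real.log 2 * ((t - u) + (s - u))
      - (s + t - 2*u) * Real.log (s + t - 2*u)
      + (s - u) * Real.log (s - u) + (t - u) * Real.log (t - u))) volume 0 s :=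
    hfs.mul_continuousOn cG.continuousOn
  have i_fts : IntervalIntegrable (fun u => f u * (t - u)) volume 0 s :=
    hfs.mul_continuousOn (continuous_const.sub continuous_id).continuousOn
  have i_fss : IntervalIntegrable (fun u => f u * (s - u)) volume 0 s :=
    hfs.mul_continuousOn (continuous_const.sub continuous_id).continuousOn
  have i_fts' : IntervalIntegrable (fun u => f u * (t - u)) volume s t :=
    hfst.mul_continuousOn (continuous_const.sub continuous_id).continuousOn
  -- decomposition of Df
  have hsplit : (∫ u in (0:ℝ)..t, f u * (t - u))
      = (∫ u in (0:ℝ)..s, f u * (t-u)) + ∫ u in s..t, f u * (t-u) :=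
    (intervalIntegral.integral_add_adjacent_intervals i_fts i_fts').symm
  have hG : (∫ u in (0:ℝ)..s, f u * (Real.log 2 * ((t - u) + (s - u))
      - (s + t - 2*u) * Real.log (s + t - 2*u)
      + (s - u) * Real.log (s - u) + (t - u) * Real.log (t - u)))
      = Real.log 2 * (∫ u in (0:ℝ)..s, f u * (t-u))
        + Real.log 2 * (∫ u in (0:ℝ)..s, f u * (s-u))
        - ∫ u in (0:ℝ)..s, f u * ((s + t - 2*u) * Real.log (s + t - 2*u)
            - (s - u) * Real.log (s - u) - (t - u) * Real.log (t - u)) := by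
    rw [← intervalIntegral.integral_const_mul, ← intervalIntegral.integral_const_mul,
      ← intervalIntegral.integral_add (i_fts.const_mul _) (i_fss.const_mul _),
      ← intervalIntegral.integral_sub ((i_fts.const_mul _).add (i_fss.const_mul _)) i_fE]
    apply intervalIntegral.integral_congr
    intro u _
    simp only
    ring
  have hDf : Df f s t = 4 * (∫ u in (0:ℝ)..s, f u * (Real.log 2 * ((t - u) + (s - u))
      - (s + t - 2*u) * Real.log (s + t - 2*u)
      + (s - u) * Real.log (s - u) + (t - u) * Real.log (t - u)))
      + 4 * Real.log 2 * ∫ u in s..t, f u * (t - u) := by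
    rw [hG]
    unfold Df
    rw [Ktt_aux f t ht0, Ktt_aux f s hs, hsplit]
    unfold Kf
    rw [min_eq_left hst.le]
    ring
  -- integrability of the comparison integrand R
  have cden : ContinuousOn (fun u : ℝ => c*(t-s)^2/(s+t-2*u)) (Set.uIcc 0 s) := by
    apply ContinuousOn.div continuousOn_const
      (continuous_const.sub (continuous_const.mul continuous_id)).continuousOn
    intro u hu
    rw [Set.uIcc_of_le hs.le] at hu
    have h2 := hu.2
    intro h0
    simp only [Pi.sub_apply, Pi.mul_apply, id_eq] at h0
    linarith
  have i_R : IntervalIntegrable (fun u => u^α * (c*(t-s)^2/(s+t-2*u))) volume 0 s :=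
    (intervalIntegral.intervalIntegrable_rpow' hα1).mul_continuousOn cden
  -- step B1 : comparison of the main integral
  have hb1 : (∫ u in (0:ℝ)..s, f u * (Real.log 2 * ((t - u) + (s - u))
      - (s + t - 2*u) * Real.log (s + t - 2*u)
      + (s - u) * Real.log (s - u) + (t - u) * Real.log (t - u)))
      ≤ ∫ u in (0:ℝ)..s, u^α * (c*(t-s)^2/(s+t-2*u)) := by
    apply intervalIntegral.integral_mono_ae_restrict hs.le i_fG i_R
    have h0 : ∀ᵐ (u:ℝ) ∂(volume.restrict (Set.Icc (0:ℝ) s)), u ≠ 0 := by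
      apply ae_restrict_of_ae
      rw [ae_iff]
      have he : {u : ℝ | ¬ u ≠ 0} = {0} := by ext x; simp
      rw [he]
      exact measure_singleton 0
    have hmem : ∀ᵐ (u:ℝ) ∂(volume.restrict (Set.Icc (0:ℝ) s)), u ∈ Set.Icc (0:ℝ) s :=
      ae_restrict_mem measurableSet_Icc
    filter_upwards [h0, hmem] with u hu0 humem
    have hu' : 0 < u := lt_of_le_of_ne humem.1 (Ne.symm hu0)
    have hus : u ≤ s := humem.2
    have hden : 0 < s + t - 2*u := by linarith
    have hGb := Gbound (s-u) (t-s) (by linarith) hd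
    rw [show 2*(s-u)+(t-s) = s+t-2*u by ring, show s-u+(t-s) = t-u by ring] at hGb
    have step2 : f u ≤ c * u^α := hbound u ⟨hu', le_trans hus hsT⟩
    calc f u * (Real.log 2 * ((t - u) + (s - u))
          - (s + t - 2*u) * Real.log (s + t - 2*u)
          + (s - u) * Real.log (s - u) + (t - u) * Real.log (t - u))
        ≤ f u * ((t-s)^2/(s+t-2*u)) :=
          mul_le_mul_of_nonneg_left hGb (hf_nonneg u hu'.le)
      _ ≤ (c * u^α) * ((t-s)^2/(s+t-2*u)) :=
          mul_le_mul_of_nonneg_right step2 (div_nonneg (sq_nonneg _) hden.le)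
      _ = u^α * (c*(t-s)^2/(s+t-2*u)) := by ring
  -- split the comparison integral at s/2
  have i_R1 : IntervalIntegrable (fun u => u^α * (c*(t-s)^2/(s+t-2*u))) volume 0 (s/2) :=
    i_R.mono_set (by
      rw [Set.uIcc_of_le (by linarith : (0:ℝ) ≤ s/2), Set.uIcc_of_le hs.le]
      exact Set.Icc_subset_Icc le_rfl (by linarith))
  have i_R2 : IntervalIntegrable (fun u => u^α * (c*(t-s)^2/(s+t-2*u))) volume (s/2) s :=
    i_R.mono_set (by
      rw [Set.uIcc_of_le (by linarith : s/2 ≤ s), Set.uIcc_of_le hs.le]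
      exact Set.Icc_subset_Icc (by linarith) le_rfl)
  have hsplit2 : (∫ u in (0:ℝ)..s, u^α * (c*(t-s)^2/(s+t-2*u)))
      = (∫ u in (0:ℝ)..(s/2), u^α * (c*(t-s)^2/(s+t-2*u)))
        + ∫ u in (s/2)..s, u^α * (c*(t-s)^2/(s+t-2*u)) :=
    (intervalIntegral.integral_add_adjacent_intervals i_R1 i_R2).symm
  -- common rpow facts
  have e2 : (t-s)^2 = (t-s)^(2+α-κ) * (t-s)^(κ-α) := by
    rw [← Real.rpow_natCast (t-s) 2, ← Real.rpow_add hd]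
    norm_num
  have e3 : (t-s)^(κ-α) ≤ T^(κ-α) := Real.rpow_le_rpow hd.le hdT hθ.le
  have e6 : ((s/2):ℝ)^α = s^α * 2^(-α) := by
    rw [Real.div_rpow hs.le (by norm_num : (0:ℝ) ≤ 2), Real.rpow_neg (by norm_num : (0:ℝ) ≤ 2)]
    ring
  -- bound I1
  have hI1 : (∫ u in (0:ℝ)..(s/2), u^α * (c*(t-s)^2/(s+t-2*u)))
      ≤ (c * 2^(-α)/(2*(α+1)) * T^(κ-α)) * (s^α * (t-s)^(2+α-κ)) := by
    have step : (∫ u in (0:ℝ)..(s/2), u^α * (c*(t-s)^2/(s+t-2*u)))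
        ≤ ∫ u in (0:ℝ)..(s/2), u^α * (c*(t-s)^2/s) := by
      apply intervalIntegral.integral_mono_on (by linarith) i_R1
        ((intervalIntegral.intervalIntegrable_rpow' hα1).mul_continuousOn continuousOn_const)
      intro u hu
      have hden : 0 < s + t - 2*u := by
        have := hu.2; have := hu.1; nlinarith
      apply mul_le_mul_of_nonneg_left ?_ (Real.rpow_nonneg hu.1 α)
      rw [div_le_div_iff₀ hden hs]
      have h2u : 0 ≤ t - 2*u := by
        have := hu.2; linarith
      have hfac : (0:ℝ) ≤ c*(t-s)^2 * (t - 2*u) := by positivity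
      have hexp : c*(t-s)^2*(s+t-2*u) = c*(t-s)^2*s + c*(t-s)^2*(t-2*u) := by ring
      linarith
    have e_int : (∫ u in (0:ℝ)..(s/2), u^α * (c*(t-s)^2/s))
        = (∫ u in (0:ℝ)..(s/2), u^α) * (c*(t-s)^2/s) :=
      intervalIntegral.integral_mul_const _ _
    have e_rpow : (∫ u in (0:ℝ)..(s/2), u^α) = ((s/2)^(α+1))/(α+1) := by
      rw [integral_rpow (Or.inl hα1)]
      rw [Real.zero_rpow (ne_of_gt hα1')]
      ring
    have e1 : ((s/2):ℝ)^(α+1) = s^α * 2^(-α) * (s/2) := by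
      rw [Real.rpow_add (by positivity : (0:ℝ) < s/2), Real.rpow_one, e6]
    have hK : (0:ℝ) ≤ c * 2^(-α)/(2*(α+1)) := by
      apply div_nonneg (by positivity) (by linarith)
    have hmid : s^α * ((t-s)^(2+α-κ) * (t-s)^(κ-α)) ≤ s^α * ((t-s)^(2+α-κ) * T^(κ-α)) := by
      apply mul_le_mul_of_nonneg_left
        (mul_le_mul_of_nonneg_left e3 (Real.rpow_nonneg hd.le _)) (Real.rpow_nonneg hs.le _)
    calc (∫ u in (0:ℝ)..(s/2), u^α * (c*(t-s)^2/(s+t-2*u)))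
        ≤ ∫ u in (0:ℝ)..(s/2), u^α * (c*(t-s)^2/s) := step
      _ = ((s/2)^(α+1))/(α+1) * (c*(t-s)^2/s) := by rw [e_int, e_rpow]
      _ = (c * 2^(-α)/(2*(α+1))) * (s^α * ((t-s)^(2+α-κ) * (t-s)^(κ-α))) := by
          rw [e1, e2]; field_simp
      _ ≤ (c * 2^(-α)/(2*(α+1))) * (s^α * ((t-s)^(2+α-κ) * T^(κ-α))) :=
          mul_le_mul_of_nonneg_left hmid hK
      _ = (c * 2^(-α)/(2*(α+1)) * T^(κ-α)) * (s^α * (t-s)^(2+α-κ)) := by ring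
  -- bound I2
  have hI2 : (∫ u in (s/2)..s, u^α * (c*(t-s)^2/(s+t-2*u)))
      ≤ (c * 2^(-α) * T^(κ-α)/(2*(κ-α))) * (s^α * (t-s)^(2+α-κ)) := by
    have hcont2 : ContinuousOn
        (fun u : ℝ => (c*(s/2)^α*(t-s)^(2-(κ-α))) * (s+t-2*u)^((κ-α)-1))
        (Set.uIcc (s/2) s) := by
      apply ContinuousOn.mul continuousOn_const
      apply ContinuousOn.rpow_const
        (continuous_const.sub (continuous_const.mul continuous_id)).continuousOn
      intro u hu
      rw [Set.uIcc_of_le (by linarith : s/2 ≤ s)] at hu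
      have h2 := hu.2
      left
      intro h0
      simp only [Pi.sub_apply, Pi.mul_apply, id_eq] at h0
      linarith
    have step : (∫ u in (s/2)..s, u^α * (c*(t-s)^2/(s+t-2*u)))
        ≤ ∫ u in (s/2)..s, (c*(s/2)^α*(t-s)^(2-(κ-α))) * (s+t-2*u)^((κ-α)-1) := by
      apply intervalIntegral.integral_mono_on (by linarith) i_R2 hcont2.intervalIntegrable
      intro u hu
      have hden : t - s ≤ s+t-2*u := by linarith [hu.2]
      have hXpos : (0:ℝ) < s+t-2*u := lt_of_lt_of_le hd hden
      have h1 : u^α ≤ ((s/2):ℝ)^α :=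
        Real.rpow_le_rpow_of_nonpos (by linarith) hu.1 hα2.le
      have h2 : (t-s)^2/(s+t-2*u) ≤ (t-s)^(2-(κ-α)) * (s+t-2*u)^((κ-α)-1) :=
        aux2 (t-s) (s+t-2*u) (κ-α) hd hθ hden
      calc u^α * (c*(t-s)^2/(s+t-2*u)) = c * (u^α * ((t-s)^2/(s+t-2*u))) := by ring
        _ ≤ c * (((s/2):ℝ)^α * ((t-s)^(2-(κ-α)) * (s+t-2*u)^((κ-α)-1))) := by
            apply mul_le_mul_of_nonneg_left ?_ hc.le
            apply mul_le_mul h1 h2 (div_nonneg (sq_nonneg _) hXpos.le)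
              (Real.rpow_nonneg (by linarith) α)
        _ = (c*(s/2)^α*(t-s)^(2-(κ-α))) * (s+t-2*u)^((κ-α)-1) := by ring
    have e_pull : (∫ u in (s/2)..s, (c*(s/2)^α*(t-s)^(2-(κ-α))) * (s+t-2*u)^((κ-α)-1))
        = (c*(s/2)^α*(t-s)^(2-(κ-α))) * ∫ u in (s/2)..s, (s+t-2*u)^((κ-α)-1) :=
      intervalIntegral.integral_const_mul _ _
    have e_ftc := ftc_aux (κ-α) (s+t) (s/2) s hθ (by linarith)
      (by linarith : (0:ℝ) < s + t - 2*s)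
    rw [show s+t-2*(s/2) = t by ring, show s+t-2*s = t-s by ring] at e_ftc
    have hb : (t^(κ-α) - (t-s)^(κ-α))/(2*(κ-α)) ≤ T^(κ-α)/(2*(κ-α)) := by
      apply (div_le_div_iff_of_pos_right (by linarith : (0:ℝ) < 2*(κ-α))).2
      have := Real.rpow_le_rpow ht0.le ht hθ.le
      have := Real.rpow_nonneg hd.le (κ-α)
      linarith
    have hK2 : (0:ℝ) ≤ c*(s/2)^α*(t-s)^(2-(κ-α)) := by positivity
    calc (∫ u in (s/2)..s, u^α * (c*(t-s)^2/(s+t-2*u)))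
        ≤ ∫ u in (s/2)..s, (c*(s/2)^α*(t-s)^(2-(κ-α))) * (s+t-2*u)^((κ-α)-1) := step
      _ = (c*(s/2)^α*(t-s)^(2-(κ-α))) * ((t^(κ-α) - (t-s)^(κ-α))/(2*(κ-α))) := by
          rw [e_pull, e_ftc]
      _ ≤ (c*(s/2)^α*(t-s)^(2-(κ-α))) * (T^(κ-α)/(2*(κ-α))) :=
          mul_le_mul_of_nonneg_left hb hK2
      _ = (c * 2^(-α) * T^(κ-α)/(2*(κ-α))) * (s^α * (t-s)^(2+α-κ)) := by
          rw [e6, show (2:ℝ)-(κ-α) = 2+α-κ by ring]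
          ring
  -- bound the tail term
  have hT3 : (∫ u in s..t, f u * (t-u)) ≤ (c*T^(κ-α)) * (s^α * (t-s)^(2+α-κ)) := by
    have step : (∫ u in s..t, f u * (t-u)) ≤ ∫ _u in s..t, (c*s^α*(t-s) : ℝ) := by
      apply intervalIntegral.integral_mono_on hst.le i_fts' intervalIntegrable_const
      intro u hu
      have h1 : f u ≤ c * u^α := hbound u ⟨lt_of_lt_of_le hs hu.1, le_trans hu.2 ht⟩
      have h2 : u^α ≤ s^α := Real.rpow_le_rpow_of_nonpos hs hu.1 hα2.le
      have h3 : t - u ≤ t - s := by linarith [hu.1]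
      have h4 : f u ≤ c * s^α := le_trans h1 (mul_le_mul_of_nonneg_left h2 hc.le)
      calc f u * (t-u) ≤ (c*s^α) * (t-s) :=
            mul_le_mul h4 h3 (by linarith [hu.2]) (by positivity)
        _ = c*s^α*(t-s) := by ring
    rw [intervalIntegral.integral_const, smul_eq_mul] at step
    calc (∫ u in s..t, f u * (t-u)) ≤ (t-s)*(c*s^α*(t-s)) := step
      _ = c*s^α*((t-s)^2) := by ring
      _ = c*s^α*((t-s)^(2+α-κ)*(t-s)^(κ-α)) := by rw [e2]
      _ ≤ c*s^α*((t-s)^(2+α-κ)*T^(κ-α)) := by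
          apply mul_le_mul_of_nonneg_left
            (mul_le_mul_of_nonneg_left e3 (Real.rpow_nonneg hd.le _)) (by positivity)
      _ = (c*T^(κ-α))*(s^α*(t-s)^(2+α-κ)) := by ring
  -- assemble
  rw [hDf]
  have hlog2 : (0:ℝ) ≤ Real.log 2 := Real.log_nonneg one_le_two
  have total1 : (∫ u in (0:ℝ)..s, f u * (Real.log 2 * ((t - u) + (s - u))
      - (s + t - 2*u) * Real.log (s + t - 2*u)
      + (s - u) * Real.log (s - u) + (t - u) * Real.log (t - u)))
      ≤ (c * 2^(-α)/(2*(α+1)) * T^(κ-α)) * (s^α * (t-s)^(2+α-κ))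
        + (c * 2^(-α) * T^(κ-α)/(2*(κ-α))) * (s^α * (t-s)^(2+α-κ)) := by
    linarith [hb1, hI1, hI2, hsplit2]
  have t3' : 4*Real.log 2 * (∫ u in s..t, f u * (t-u))
      ≤ 4*Real.log 2 * ((c*T^(κ-α)) * (s^α * (t-s)^(2+α-κ))) := by
    apply mul_le_mul_of_nonneg_left hT3 (by linarith)
  calc 4 * (∫ u in (0:ℝ)..s, f u * (Real.log 2 * ((t - u) + (s - u))
        - (s + t - 2*u) * Real.log (s + t - 2*u)
        + (s - u) * Real.log (s - u) + (t - u) * Real.log (t - u)))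
      + 4 * Real.log 2 * ∫ u in s..t, f u * (t - u)
      ≤ 4 * ((c * 2^(-α)/(2*(α+1)) * T^(κ-α)) * (s^α * (t-s)^(2+α-κ))
          + (c * 2^(-α) * T^(κ-α)/(2*(κ-α))) * (s^α * (t-s)^(2+α-κ)))
        + 4*Real.log 2 * ((c*T^(κ-α)) * (s^α * (t-s)^(2+α-κ))) := by
        apply add_le_add (mul_le_mul_of_nonneg_left total1 (by norm_num)) t3'
    _ = (4*(c * 2^(-α)/(2*(α+1)) * T^(κ-α)) + 4*(c * 2^(-α) * T^(κ-α)/(2*(κ-α)))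
        + 4*Real.log 2*(c*T^(κ-α))) * (s^α * (t-s)^(2+α-κ)) := by ring

theorem stmt_12 (T : ℝ) (hT : 0 < T) (α : ℝ) (hα : α ∈ Set.Ioo (-1 : ℝ) 0)
    (f : ℝ → ℝ) (hf_meas : Measurable f)
    (hf_nonneg : ∀ u, 0 ≤ u → 0 ≤ f u)
    (hf_int : ∀ δ : ℝ, 0 < δ → IntervalIntegrable f volume 0 δ)
    (c : ℝ) (hc : 0 < c) (hbound : ∀ u ∈ Set.Ioc (0:ℝ) T, f u ≤ c * u ^ α)
    (κ : ℝ) (hκ : κ ∈ Set.Ioo (0:ℝ) 1) (hκα : 0 < 1 + α - κ) :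
    ∃ C : ℝ, 0 < C ∧ ∀ s ∈ Set.Ioc (0:ℝ) T, ∀ t ∈ Set.Ioc (0:ℝ) T,
      Df f s t ≤ C * (min s t) ^ α * |t - s| ^ (2 + α - κ) := by
  have hα1 : (-1:ℝ) < α := hα.1
  have hα2 : α < 0 := hα.2
  have hθ : 0 < κ - α := by have := hκ.1; linarith
  have hC0nn : 0 ≤ 4*(c * 2^(-α)/(2*(α+1)) * T^(κ-α)) + 4*(c * 2^(-α) * T^(κ-α)/(2*(κ-α)))
      + 4*Real.log 2*(c*T^(κ-α)) := by
    have h1 : (0:ℝ) ≤ 4*(c * 2^(-α)/(2*(α+1)) * T^(κ-α)) := by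
      apply mul_nonneg (by norm_num)
      apply mul_nonneg (div_nonneg (by positivity) (by linarith)) (by positivity)
    have h2 : (0:ℝ) ≤ 4*(c * 2^(-α) * T^(κ-α)/(2*(κ-α))) := by
      apply mul_nonneg (by norm_num)
      apply div_nonneg (by positivity) (by linarith)
    have h3 : (0:ℝ) ≤ 4*Real.log 2*(c*T^(κ-α)) := by
      apply mul_nonneg (mul_nonneg (by norm_num) (Real.log_nonneg one_le_two)) (by positivity)
    linarith
  set C0 : ℝ := 4*(c * 2^(-α)/(2*(α+1)) * T^(κ-α)) + 4*(c * 2^(-α) * T^(κ-α)/(2*(κ-α)))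
      + 4*Real.log 2*(c*T^(κ-α)) with hC0
  refine ⟨C0 + 1, by linarith, ?_⟩
  intro s hs t ht
  have hexp : (0:ℝ) < 2 + α - κ := by linarith
  rcases lt_trichotomy s t with h | h | h
  · rw [min_eq_left h.le, abs_of_pos (sub_pos.2 h)]
    have hmain := main_est T hT α hα f hf_nonneg hf_int c hc hbound κ hκ hκα s t hs.1 h ht.2
    have hX : 0 ≤ s^α * (t-s)^(2+α-κ) :=
      mul_nonneg (Real.rpow_nonneg hs.1.le α) (Real.rpow_nonneg (sub_pos.2 h).le _)
    calc Df f s t ≤ C0 * (s^α * (t-s)^(2+α-κ)) := hmain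
      _ ≤ (C0+1) * (s^α * (t-s)^(2+α-κ)) := mul_le_mul_of_nonneg_right (by linarith) hX
      _ = (C0+1) * s^α * (t-s)^(2+α-κ) := by ring
  · have hzero : Df f s t = 0 := by rw [h]; unfold Df; ring
    rw [hzero, h, sub_self, abs_zero, Real.zero_rpow hexp.ne', mul_zero]
  · have hsym : Df f s t = Df f t s := by unfold Df; rw [Kf_comm f s t]; ring
    rw [hsym, min_eq_right h.le, abs_sub_comm, abs_of_pos (sub_pos.2 h)]
    have hmain := main_est T hT α hα f hf_nonneg hf_int c hc hbound κ hκ hκα t s ht.1 h hs.2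
    have hX : 0 ≤ t^α * (s-t)^(2+α-κ) :=
      mul_nonneg (Real.rpow_nonneg ht.1.le α) (Real.rpow_nonneg (sub_pos.2 h).le _)
    calc Df f t s ≤ C0 * (t^α * (s-t)^(2+α-κ)) := hmain
      _ ≤ (C0+1) * (t^α * (s-t)^(2+α-κ)) := mul_le_mul_of_nonneg_right (by linarith) hX
      _ = (C0+1) * t^α * (s-t)^(2+α-κ) := by ring
end

section
/- Let f : [0,∞) → [0,∞) be a measurable function such that ∫_0^δ f(u) du < ∞ for every δ > 0. Then for all fixed r, s > 0, lim_{T → ∞} K_f(r, s+T) / log T = 2 ∫_0^r f(u)(r−u) du; in particular K_f(r, s+T) ∼ 2 log(T) ∫_0^r f(u)(r−u) du as T → ∞. -/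
open MeasureTheory Real Filter

private lemma aux_abs_mul_log_le {x r : ℝ} (hx0 : 0 ≤ x) (hxr : x ≤ r) :
    |x * Real.log x| ≤ 1 + r ^ 2 := by
  rcases eq_or_lt_of_le hx0 with h | h
  · rw [← h]; simp; positivity
  rcases le_or_gt x 1 with h1 | h1
  · have hlog : Real.log x ≤ 0 := Real.log_nonpos hx0 h1
    have h3 : Real.log x⁻¹ ≤ x⁻¹ - 1 := Real.log_le_sub_one_of_pos (inv_pos.mpr h)
    rw [Real.log_inv] at h3
    have h4 : x * (-Real.log x) ≤ x * (x⁻¹ - 1) :=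
      mul_le_mul_of_nonneg_left (by linarith) h.le
    have h5 : x * x⁻¹ = 1 := mul_inv_cancel₀ (ne_of_gt h)
    have h2 : x * Real.log x ≤ 0 := mul_nonpos_of_nonneg_of_nonpos h.le hlog
    rw [abs_le]
    constructor <;> nlinarith [sq_nonneg r]
  · have hlog0 : 0 ≤ Real.log x := Real.log_nonneg h1.le
    have hlog : Real.log x ≤ x - 1 := Real.log_le_sub_one_of_pos (by linarith)
    rw [abs_of_nonneg (mul_nonneg (by linarith) hlog0)]
    nlinarith

private lemma aux_abs_log_le {y M : ℝ} (h1 : 1/2 ≤ y) (h2 : y ≤ M) (hM : 1 ≤ M) :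
    |Real.log y| ≤ Real.log 2 + Real.log M := by
  have hy : 0 < y := lt_of_lt_of_le (by norm_num) h1
  have hlM : 0 ≤ Real.log M := Real.log_nonneg hM
  have hl2 : 0 ≤ Real.log 2 := Real.log_nonneg one_le_two
  rcases le_or_gt 1 y with h | h
  · rw [abs_of_nonneg (Real.log_nonneg h)]
    have := Real.log_le_log hy h2
    linarith
  · rw [abs_of_neg (Real.log_neg hy h)]
    have h3 : Real.log (1/2) ≤ Real.log y := Real.log_le_log (by norm_num) h1
    rw [Real.log_div one_ne_zero two_ne_zero, Real.log_one] at h3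
    linarith

private lemma aux_abstract_bound {A x T r M : ℝ} (hA : 0 < A) (hx0 : 0 ≤ x) (hxr : x ≤ r)
    (hT0 : 0 < T) (hlow : T ≤ 2 * (A + x)) (hhigh : A + x ≤ M * T) (hM : 1 ≤ M) :
    |(A + x) * Real.log (A + x) - x * Real.log x - A * Real.log A - x * Real.log T|
      ≤ r * (Real.log 2 + Real.log M) + r + (1 + r ^ 2) := by
  have hAx : 0 < A + x := by linarith
  have key : (A + x) * Real.log (A + x) - x * Real.log x - A * Real.log A - x * Real.log T
      = x * Real.log ((A + x) / T) + A * Real.log ((A + x) / A) - x * Real.log x := by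
    rw [Real.log_div (ne_of_gt hAx) (ne_of_gt hT0), Real.log_div (ne_of_gt hAx) (ne_of_gt hA)]
    ring
  rw [key]
  have b1 : |x * Real.log ((A + x) / T)| ≤ r * (Real.log 2 + Real.log M) := by
    rw [abs_mul, abs_of_nonneg hx0]
    have h1 : 1/2 ≤ (A + x) / T := (le_div_iff₀ hT0).mpr (by linarith)
    have h2 : (A + x) / T ≤ M := (div_le_iff₀ hT0).mpr (by linarith)
    exact mul_le_mul hxr (aux_abs_log_le h1 h2 hM) (abs_nonneg _) (le_trans hx0 hxr)
  have b2 : |A * Real.log ((A + x) / A)| ≤ r := by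
    have hge1 : (1:ℝ) ≤ (A + x) / A := (le_div_iff₀ hA).mpr (by linarith)
    have hlognn : 0 ≤ Real.log ((A + x) / A) := Real.log_nonneg hge1
    rw [abs_of_nonneg (mul_nonneg hA.le hlognn)]
    have h5 : Real.log ((A + x) / A) ≤ (A + x) / A - 1 :=
      Real.log_le_sub_one_of_pos (by linarith)
    have h6 : A * Real.log ((A + x) / A) ≤ A * ((A + x) / A - 1) :=
      mul_le_mul_of_nonneg_left h5 hA.le
    have h7 : A * ((A + x) / A - 1) = x := by field_simp; ring
    linarith
  have b3 := aux_abs_mul_log_le hx0 hxr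
  have h0 : |x * Real.log ((A + x) / T) + A * Real.log ((A + x) / A) - x * Real.log x|
      ≤ |x * Real.log ((A + x) / T) + A * Real.log ((A + x) / A)| + |x * Real.log x| := by
    rw [sub_eq_add_neg]
    exact (abs_add_le _ _).trans (by rw [abs_neg])
  have h1 := abs_add_le (x * Real.log ((A + x) / T)) (A * Real.log ((A + x) / A))
  linarith

private lemma aux_gbound (r s : ℝ) (hr : 0 < r) (hs : 0 < s) {T u : ℝ}
    (hT2 : 2 ≤ T) (hTr : 2 * r ≤ T) (hu0 : 0 ≤ u) (hur : u ≤ r) :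
    |((r + (s + T) - 2*u) * Real.log (r + (s + T) - 2*u)
      - (r - u) * Real.log (r - u) - ((s + T) - u) * Real.log ((s + T) - u))
      - (r - u) * Real.log T|
      ≤ r * (Real.log 2 + Real.log (1 + s + r)) + r + (1 + r ^ 2) := by
  have hA0 : 0 < s + T - u := by linarith
  have e1 : r + (s + T) - 2*u = (s + T - u) + (r - u) := by ring
  have e2 : (s + T) - u = s + T - u := by ring
  rw [e1, e2]
  exact aux_abstract_bound (A := s + T - u) (x := r - u) (r := r) (M := 1 + s + r)
    hA0 (by linarith) (by linarith) (by linarith) (by linarith)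
    (by nlinarith [mul_nonneg (by linarith : (0:ℝ) ≤ s + r) (by linarith : (0:ℝ) ≤ T - 1)])
    (by linarith)

theorem stmt_15 (f : ℝ → ℝ) (hf_meas : Measurable f)
    (hf_nonneg : ∀ u, 0 ≤ u → 0 ≤ f u)
    (hf_int : ∀ δ : ℝ, 0 < δ → IntervalIntegrable f volume 0 δ)
    (r s : ℝ) (hr : 0 < r) (hs : 0 < s) :
    Filter.Tendsto (fun T : ℝ => Kf f r (s + T) / Real.log T)
      Filter.atTop (nhds (2 * ∫ u in (0:ℝ)..r, f u * (r - u))) := by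
  set I := ∫ u in (0:ℝ)..r, f u * (r - u) with hI
  set C := r * (Real.log 2 + Real.log (1 + s + r)) + r + (1 + r ^ 2) with hC
  set F := ∫ u in (0:ℝ)..r, f u with hF
  have hfi : IntervalIntegrable f volume 0 r := hf_int r hr
  have hfri : IntervalIntegrable (fun u => f u * (r - u)) volume 0 r :=
    hfi.mul_continuousOn (Continuous.continuousOn (by continuity))
  set g : ℝ → ℝ → ℝ := fun T u =>
    (r + (s + T) - 2*u) * Real.log (r + (s + T) - 2*u)
      - (r - u) * Real.log (r - u) - ((s + T) - u) * Real.log ((s + T) - u) with hg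
  set E : ℝ → ℝ := fun T => ∫ u in (0:ℝ)..r, f u * (g T u - (r - u) * Real.log T) with hE
  have hφ : Continuous (fun x : ℝ => x * Real.log x) := Real.continuous_mul_log
  have hgc : ∀ T : ℝ, Continuous (fun u => g T u) := by
    intro T
    have c1 : Continuous fun u : ℝ => r + (s + T) - 2*u := by continuity
    have c2 : Continuous fun u : ℝ => r - u := by continuity
    have c3 : Continuous fun u : ℝ => (s + T) - u := by continuity
    exact ((hφ.comp c1).sub (hφ.comp c2)).sub (hφ.comp c3)
  have hint1 : ∀ T : ℝ, IntervalIntegrable (fun u => f u * g T u) volume 0 r :=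
    fun T => hfi.mul_continuousOn (hgc T).continuousOn
  have hint2 : ∀ T : ℝ,
      IntervalIntegrable (fun u => f u * ((r - u) * Real.log T)) volume 0 r := by
    intro T
    exact hfi.mul_continuousOn (Continuous.continuousOn (by continuity))
  have hint3 : ∀ T : ℝ,
      IntervalIntegrable (fun u => f u * (g T u - (r - u) * Real.log T)) volume 0 r := by
    intro T
    have := (hint1 T).sub (hint2 T)
    simpa [mul_sub] using this
  -- eventual equality
  have hev : ∀ᶠ T in atTop,
      Kf f r (s + T) / Real.log T = 2 * I + 2 * (E T / Real.log T) := by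
    filter_upwards [eventually_ge_atTop (2:ℝ), eventually_ge_atTop (2*r),
      eventually_gt_atTop (1:ℝ)] with T hT2 hTr hT1
    have hlogT : 0 < Real.log T := Real.log_pos hT1
    have hmin : min r (s + T) = r := min_eq_left (by linarith)
    have hKf : Kf f r (s + T) = 2 * ∫ u in (0:ℝ)..r, f u * g T u := by
      rw [Kf, hmin]
    have hsplit : (∫ u in (0:ℝ)..r, f u * g T u)
        = Real.log T * I + E T := by
      have e : ∀ u : ℝ, f u * g T u
          = Real.log T * (f u * (r - u)) + f u * (g T u - (r - u) * Real.log T) := by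
        intro u; ring
      rw [intervalIntegral.integral_congr (fun u _ => e u)]
      rw [intervalIntegral.integral_add (hfri.const_mul _) (hint3 T),
        intervalIntegral.integral_const_mul]
    rw [hKf, hsplit]
    field_simp
  have hEbound : ∀ᶠ T in atTop, |E T| ≤ C * F := by
    filter_upwards [eventually_ge_atTop (2:ℝ), eventually_ge_atTop (2*r)] with T hT2 hTr
    have h1 : |E T| ≤ ∫ u in (0:ℝ)..r, |f u * (g T u - (r - u) * Real.log T)| :=
      intervalIntegral.abs_integral_le_integral_abs hr.le
    have h2 : (∫ u in (0:ℝ)..r, |f u * (g T u - (r - u) * Real.log T)|)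
        ≤ ∫ u in (0:ℝ)..r, C * f u := by
      apply intervalIntegral.integral_mono_on hr.le (hint3 T).abs (hfi.const_mul C)
      intro u hu
      rw [abs_mul, abs_of_nonneg (hf_nonneg u hu.1)]
      have hb := aux_gbound r s hr hs hT2 hTr hu.1 hu.2
      calc f u * |g T u - (r - u) * Real.log T| ≤ f u * C :=
            mul_le_mul_of_nonneg_left hb (hf_nonneg u hu.1)
        _ = C * f u := mul_comm _ _
    have h3 : (∫ u in (0:ℝ)..r, C * f u) = C * F := intervalIntegral.integral_const_mul _ _
    linarith
  have h0 : Tendsto (fun T => E T / Real.log T) atTop (nhds 0) := by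
    apply squeeze_zero_norm' (a := fun T => C * F / Real.log T)
    · filter_upwards [hEbound, eventually_gt_atTop (1:ℝ)] with T hb hT1
      have hlogT : 0 < Real.log T := Real.log_pos hT1
      rw [Real.norm_eq_abs, abs_div, abs_of_pos hlogT]
      gcongr
    · exact tendsto_const_nhds.div_atTop Real.tendsto_log_atTop
  have hfinal : Tendsto (fun T => 2 * I + 2 * (E T / Real.log T)) atTop (nhds (2 * I)) := by
    have h4 := h0.const_mul (2:ℝ)
    simpa using tendsto_const_nhds.add h4
  exact hfinal.congr' (EventuallyEq.symm hev)
end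

section
/- Let f : [0,∞) → [0,∞) be a measurable function such that ∫_0^δ f(u) du < ∞ for every δ > 0. Then for all 0 < r ≤ ν and 0 < s ≤ t, lim_{T → ∞} T · [ K_f(ν, t+T) − K_f(ν, s+T) − K_f(r, t+T) + K_f(r, s+T) ] = 2 (t−s) [ ∫_0^ν f(u)(ν−u) du − ∫_0^r f(u)(r−u) du ]. (For a centered Gaussian process ζ with covariance K_f, the bracketed quantity equals E[(ζ_ν − ζ_r)(ζ_{t+T} − ζ_{s+T})], so this expresses long-range dependence.) -/
open MeasureTheory Real Filter

lemma psi_bounds (A B C : ℝ) (hA : 0 ≤ A) (hC : 0 < C) (hCB : C ≤ B) :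
    (B - C) * (A / (A + B)) ≤
      ((A+B)*Real.log (A+B) - B*Real.log B) - ((A+C)*Real.log (A+C) - C*Real.log C) ∧
    ((A+B)*Real.log (A+B) - B*Real.log B) - ((A+C)*Real.log (A+C) - C*Real.log C) ≤
      (B - C) * (A / C) := by
  have hB : 0 < B := hC.trans_le hCB
  have hint : IntervalIntegrable (fun x => Real.log (A+x) - Real.log x) volume C B := by
    apply ContinuousOn.intervalIntegrable
    rw [Set.uIcc_of_le hCB]
    apply ContinuousOn.sub
    · exact ((continuous_const.add continuous_id).continuousOn).log
        (fun x hx => by have h : (0:ℝ) < x := hC.trans_le hx.1; exact (show (0:ℝ) < A + x by linarith).ne')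
    · exact (continuous_id.continuousOn).log
        (fun x hx => by have h : (0:ℝ) < x := hC.trans_le hx.1; exact h.ne')
  have key : ((A+B)*Real.log (A+B) - B*Real.log B) - ((A+C)*Real.log (A+C) - C*Real.log C)
      = ∫ x in C..B, (Real.log (A+x) - Real.log x) := by
    rw [intervalIntegral.integral_eq_sub_of_hasDerivAt (f := fun x => (A+x)*Real.log (A+x) - x*Real.log x) ?_ hint]
    intro x hx
    rw [Set.uIcc_of_le hCB] at hx
    have hx0 : 0 < x := hC.trans_le hx.1
    have hAx : 0 < A + x := by positivity
    have d1 : HasDerivAt (fun y : ℝ => y * Real.log y) (Real.log (A+x) + 1) (A+x) :=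
      Real.hasDerivAt_mul_log hAx.ne'
    have d2 : HasDerivAt (fun x : ℝ => A + x) 1 x := (hasDerivAt_id x).const_add A
    have d3 := d1.comp x d2
    have d4 : HasDerivAt (fun y : ℝ => y * Real.log y) (Real.log x + 1) x :=
      Real.hasDerivAt_mul_log hx0.ne'
    have d5 := d3.sub d4
    convert d5 using 1
    · funext y; simp only [Pi.sub_apply, Function.comp_apply]
    · ring
  constructor
  · rw [key]
    calc (B - C) * (A / (A + B)) = ∫ _ in C..B, A / (A + B) := by
          rw [intervalIntegral.integral_const, smul_eq_mul]
      _ ≤ _ := by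
          apply intervalIntegral.integral_mono_on hCB intervalIntegrable_const hint
          intro x hx
          have hx0 : 0 < x := hC.trans_le hx.1
          have hAx : 0 < A + x := by positivity
          have h1 : Real.log x - Real.log (A+x) = Real.log (x/(A+x)) :=
            (Real.log_div hx0.ne' hAx.ne').symm
          have h2 : Real.log (x/(A+x)) ≤ x/(A+x) - 1 := Real.log_le_sub_one_of_pos (by positivity)
          have h3 : x/(A+x) - 1 = -(A/(A+x)) := by field_simp; ring
          have h4 : A/(A+B) ≤ A/(A+x) := by
            apply div_le_div_of_nonneg_left hA hAx
            linarith [hx.2]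
          linarith
  · rw [key]
    calc _ ≤ ∫ _ in C..B, A / C := by
          apply intervalIntegral.integral_mono_on hCB hint intervalIntegrable_const
          intro x hx
          have hx0 : 0 < x := hC.trans_le hx.1
          have hAx : 0 < A + x := by positivity
          have h1 : Real.log (A+x) - Real.log x = Real.log ((A+x)/x) :=
            (Real.log_div hAx.ne' hx0.ne').symm
          have h2 : Real.log ((A+x)/x) ≤ (A+x)/x - 1 := Real.log_le_sub_one_of_pos (by positivity)
          have h3 : (A+x)/x - 1 = A/x := by field_simp; ring
          have h4 : A/x ≤ A/C := div_le_div_of_nonneg_left hA hC hx.1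
          linarith
      _ = (B - C) * (A / C) := by rw [intervalIntegral.integral_const, smul_eq_mul]

lemma tendsto_div_add (k : ℝ) : Tendsto (fun T : ℝ => T / (T + k)) atTop (nhds 1) := by
  have h1 : Tendsto (fun T : ℝ => k / (T + k)) atTop (nhds 0) :=
    Tendsto.div_atTop tendsto_const_nhds (tendsto_atTop_add_const_right _ k tendsto_id)
  have h2 : Tendsto (fun T : ℝ => 1 - k / (T + k)) atTop (nhds (1 - 0)) :=
    tendsto_const_nhds.sub h1
  rw [sub_zero] at h2
  apply h2.congr'
  filter_upwards [eventually_gt_atTop (-k + 1)] with T hT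
  have : T + k ≠ 0 := by linarith
  field_simp; ring

lemma psi_lim (A b c : ℝ) (hA : 0 ≤ A) (hcb : c ≤ b) :
    Tendsto (fun T : ℝ => T * (((A+(b+T))*Real.log (A+(b+T)) - (b+T)*Real.log (b+T))
      - ((A+(c+T))*Real.log (A+(c+T)) - (c+T)*Real.log (c+T)))) atTop (nhds ((b-c)*A)) := by
  have hL : Tendsto (fun T : ℝ => T * ((b - c) * (A / (A + (b+T))))) atTop (nhds ((b-c)*A)) := by
    have := (tendsto_div_add (A + b)).const_mul ((b-c)*A)
    rw [mul_one] at this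
    apply this.congr
    intro T; ring_nf
  have hU : Tendsto (fun T : ℝ => T * ((b - c) * (A / (c+T)))) atTop (nhds ((b-c)*A)) := by
    have := (tendsto_div_add c).const_mul ((b-c)*A)
    rw [mul_one] at this
    apply this.congr
    intro T; ring_nf
  apply tendsto_of_tendsto_of_tendsto_of_le_of_le' hL hU
  · filter_upwards [eventually_gt_atTop (max 0 (-c + 1))] with T hT
    have hT0 : 0 < T := lt_of_le_of_lt (le_max_left _ _) hT
    have hcT : 0 < c + T := by have := lt_of_le_of_lt (le_max_right _ _) hT; linarith
    have hb := (psi_bounds A (b+T) (c+T) hA hcT (by linarith)).1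
    have := mul_le_mul_of_nonneg_left hb hT0.le
    calc T * ((b - c) * (A / (A + (b+T))))
        = T * ((b+T - (c+T)) * (A / (A + (b+T)))) := by ring
      _ ≤ _ := this
  · filter_upwards [eventually_gt_atTop (max 0 (-c + 1))] with T hT
    have hT0 : 0 < T := lt_of_le_of_lt (le_max_left _ _) hT
    have hcT : 0 < c + T := by have := lt_of_le_of_lt (le_max_right _ _) hT; linarith
    have hb := (psi_bounds A (b+T) (c+T) hA hcT (by linarith)).2
    have := mul_le_mul_of_nonneg_left hb hT0.le
    calc T * (((A+(b+T))*Real.log (A+(b+T)) - (b+T)*Real.log (b+T))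
          - ((A+(c+T))*Real.log (A+(c+T)) - (c+T)*Real.log (c+T)))
        ≤ T * ((b+T - (c+T)) * (A / (c+T))) := this
      _ = T * ((b - c) * (A / (c+T))) := by ring

lemma main_lim (f : ℝ → ℝ) (hf_meas : Measurable f)
    (hf_int : ∀ δ : ℝ, 0 < δ → IntervalIntegrable f volume 0 δ)
    (a s t : ℝ) (ha : 0 < a) (hs : 0 < s) (hst : s ≤ t) :
    Tendsto (fun T : ℝ => T * (Kf f a (t + T) - Kf f a (s + T))) atTop
      (nhds (2 * (t - s) * ∫ u in (0:ℝ)..a, f u * (a - u))) := by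
  set F : ℝ → ℝ → ℝ := fun T u => 2 * f u *
    (T * (((a-u+(t-u+T))*Real.log (a-u+(t-u+T)) - (t-u+T)*Real.log (t-u+T))
      - ((a-u+(s-u+T))*Real.log (a-u+(s-u+T)) - (s-u+T)*Real.log (s-u+T)))) with hF
  set G : ℝ → ℝ := fun u => 2 * f u * ((t - u - (s - u)) * (a - u)) with hG
  have hDCT : Tendsto (fun T => ∫ u in (0:ℝ)..a, F T u) atTop (nhds (∫ u in (0:ℝ)..a, G u)) := by
    apply intervalIntegral.tendsto_integral_filter_of_dominated_convergence
      (bound := fun u => ‖f u‖ * (4*(t-s)*a))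
    · filter_upwards with T
      apply Measurable.aestronglyMeasurable
      have hm : Measurable (fun y : ℝ => y * Real.log y) := measurable_id.mul Real.measurable_log
      exact (measurable_const.mul hf_meas).mul (measurable_const.mul
        (((hm.comp (by fun_prop)).sub (hm.comp (by fun_prop))).sub
          ((hm.comp (by fun_prop)).sub (hm.comp (by fun_prop)))))
    · filter_upwards [eventually_ge_atTop (2*a)] with T hT
      apply ae_of_all
      intro u hu
      rw [Set.uIoc_of_le ha.le] at hu
      have hu0 : 0 < u := hu.1
      have hua : u ≤ a := hu.2
      have hT0 : 0 < T := by linarith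
      have hA : 0 ≤ a - u := by linarith
      have hC : 0 < s - u + T := by linarith
      have hCB : s - u + T ≤ t - u + T := by linarith
      obtain ⟨hlb, hub⟩ := psi_bounds (a-u) (t-u+T) (s-u+T) hA hC hCB
      set ψ : ℝ := ((a-u+(t-u+T))*Real.log (a-u+(t-u+T)) - (t-u+T)*Real.log (t-u+T))
        - ((a-u+(s-u+T))*Real.log (a-u+(s-u+T)) - (s-u+T)*Real.log (s-u+T)) with hψ
      have hψ0 : 0 ≤ ψ := by
        have h0 : 0 ≤ ((t-u+T) - (s-u+T)) * ((a-u)/(a-u+(t-u+T))) :=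
          mul_nonneg (by linarith) (div_nonneg hA (by linarith))
        linarith
      have key : T * ψ ≤ 2*(t-s)*(a-u) := by
        have h1 : T * ψ ≤ T * (((t-u+T) - (s-u+T)) * ((a-u)/(s-u+T))) :=
          mul_le_mul_of_nonneg_left hub hT0.le
        have e : T * (((t-u+T) - (s-u+T)) * ((a-u)/(s-u+T))) = (T*(t-s)*(a-u))/(s-u+T) := by
          field_simp; ring
        rw [e, le_div_iff₀ hC] at h1
        nlinarith [mul_nonneg (mul_nonneg hT0.le hψ0) (show (0:ℝ) ≤ 2*(s-u)+T by linarith)]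
      have hFeq : F T u = 2 * f u * (T * ψ) := rfl
      rw [hFeq, Real.norm_eq_abs, abs_mul, abs_mul]
      have h2 : |(2:ℝ)| = 2 := by norm_num
      have h3 : |T * ψ| = T * ψ := abs_of_nonneg (mul_nonneg hT0.le hψ0)
      rw [h2, h3, Real.norm_eq_abs]
      nlinarith [mul_le_mul_of_nonneg_left key (abs_nonneg (f u)),
        mul_nonneg (mul_nonneg (abs_nonneg (f u)) (show (0:ℝ) ≤ t - s by linarith)) hu0.le]
    · exact (hf_int a ha).norm.mul_const _
    · apply ae_of_all
      intro u hu
      rw [Set.uIoc_of_le ha.le] at hu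
      exact (psi_lim (a-u) (t-u) (s-u) (by linarith [hu.2]) (by linarith)).const_mul (2 * f u)
  have hGint : ∫ u in (0:ℝ)..a, G u = 2 * (t - s) * ∫ u in (0:ℝ)..a, f u * (a - u) := by
    rw [← intervalIntegral.integral_const_mul]
    apply intervalIntegral.integral_congr
    intro u _
    simp only [hG]
    ring
  rw [hGint] at hDCT
  apply hDCT.congr'
  filter_upwards [eventually_ge_atTop a] with T hT
  have hta : a ≤ t + T := by linarith
  have hsa : a ≤ s + T := by linarith
  have hcont : ∀ (X : ℝ), ContinuousOn (fun u => (a + X - 2*u) * Real.log (a + X - 2*u)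
      - (a-u)*Real.log (a-u) - (X-u)*Real.log (X-u)) (Set.uIcc 0 a) := by
    intro X
    apply ContinuousOn.sub
    apply ContinuousOn.sub
    all_goals exact (Real.continuous_mul_log.comp (by fun_prop)).continuousOn
  have hit : IntervalIntegrable (fun u => f u * ((a + (t+T) - 2*u) * Real.log (a + (t+T) - 2*u)
      - (a-u)*Real.log (a-u) - ((t+T)-u)*Real.log ((t+T)-u))) volume 0 a :=
    (hf_int a ha).mul_continuousOn (hcont (t+T))
  have his : IntervalIntegrable (fun u => f u * ((a + (s+T) - 2*u) * Real.log (a + (s+T) - 2*u)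
      - (a-u)*Real.log (a-u) - ((s+T)-u)*Real.log ((s+T)-u))) volume 0 a :=
    (hf_int a ha).mul_continuousOn (hcont (s+T))
  rw [Kf, Kf, min_eq_left hta, min_eq_left hsa]
  have key2 : (∫ u in (0:ℝ)..a, F T u) = (2*T) * ∫ u in (0:ℝ)..a,
      (f u * ((a + (t+T) - 2*u) * Real.log (a + (t+T) - 2*u)
        - (a-u)*Real.log (a-u) - ((t+T)-u)*Real.log ((t+T)-u))
      - f u * ((a + (s+T) - 2*u) * Real.log (a + (s+T) - 2*u)
        - (a-u)*Real.log (a-u) - ((s+T)-u)*Real.log ((s+T)-u))) := by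
    rw [← intervalIntegral.integral_const_mul]
    apply intervalIntegral.integral_congr
    intro u _
    have e1 : a - u + (t - u + T) = a + (t + T) - 2*u := by ring
    have e2 : t - u + T = t + T - u := by ring
    have e3 : a - u + (s - u + T) = a + (s + T) - 2*u := by ring
    have e4 : s - u + T = s + T - u := by ring
    simp only [hF, e1, e2, e3, e4]
    ring
  rw [key2, intervalIntegral.integral_sub hit his]
  ring

theorem stmt_16 (f : ℝ → ℝ) (hf_meas : Measurable f)
    (hf_nonneg : ∀ u, 0 ≤ u → 0 ≤ f u)
    (hf_int : ∀ δ : ℝ, 0 < δ → IntervalIntegrable f volume 0 δ)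
    (r ν s t : ℝ) (hr : 0 < r) (hrν : r ≤ ν) (hs : 0 < s) (hst : s ≤ t) :
    Filter.Tendsto
      (fun T : ℝ => T * (Kf f ν (t + T) - Kf f ν (s + T) - Kf f r (t + T) + Kf f r (s + T)))
      Filter.atTop
      (nhds (2 * (t - s) *
        ((∫ u in (0:ℝ)..ν, f u * (ν - u)) - ∫ u in (0:ℝ)..r, f u * (r - u)))) := by

  have hν := main_lim f hf_meas hf_int ν s t (hr.trans_le hrν) hs hst
  have hr' := main_lim f hf_meas hf_int r s t hr hs hst
  have h := hν.sub hr'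
  have hval : 2 * (t - s) * ((∫ u in (0:ℝ)..ν, f u * (ν - u)) - ∫ u in (0:ℝ)..r, f u * (r - u))
      = 2 * (t - s) * (∫ u in (0:ℝ)..ν, f u * (ν - u))
        - 2 * (t - s) * (∫ u in (0:ℝ)..r, f u * (r - u)) := by ring
  rw [hval]
  exact h.congr (fun T => by ring)
end
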